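/- Let Ω = ℕ^{d+1}, V = S × ℕ^{d+1}, E = S' × ℕ^{d+1}, and define the deformed grafting σ ∿̂ᵃ τ := Σ_{v∈N_τ} Σ_{ℓ∈ℕ^{d+1}} C(n_v, ℓ) · σ ∿_v^{a−ℓ} (↑_v^{−ℓ} τ), where terms with a−ℓ or n_v−ℓ undefined vanish. Then the grading |τ| := Σ_{e ∈ E_τ} |e(e)|_s (sum of scaled edge decorations) satisfies: σ ∿̂ᵃ τ = σ ∿ᵃ τ + (terms of strictly lower grading), i.e., the ℓ = 0 term is the undeformed grafting and every term with ℓ ≠ 0 has strictly smaller grading. -/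

import Mathlib

/-- Planar rooted trees with vertex decorations in `V` and edge decorations in `E`. -/
inductive RT (V E : Type) : Type where
  | node : V → List (E × RT V E) → RT V E

/-- One-step reordering of children (at the root or at a deeper vertex). -/
inductive Swap {V E : Type} : RT V E → RT V E → Prop where
  | here (v : V) (l₁ l₂ : List (E × RT V E)) (p q : E × RT V E) :
      Swap (.node v (l₁ ++ p :: q :: l₂)) (.node v (l₁ ++ q :: p :: l₂))
  | child (v : V) (l₁ l₂ : List (E × RT V E)) (e : E) {t t' : RT V E} :
      Swap t t' → Swap (.node v (l₁ ++ (e, t) :: l₂)) (.node v (l₁ ++ (e, t') :: l₂))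

/-- (Non-planar) decorated rooted trees: planar trees modulo reordering of children. -/
def QT (V E : Type) : Type := Quot (@Swap V E)

/-- The linear span of decorated rooted trees, with rational coefficients. -/
abbrev Span (V E : Type) : Type := QT V E →₀ ℚ

def qt {V E : Type} (t : RT V E) : QT V E := Quot.mk _ t

/-- A tree, as a basis vector of the span. -/
noncomputable def bas {V E : Type} (t : RT V E) : Span V E := Finsupp.single (qt t) 1

/-- The element of the span given by a list of trees (sum with multiplicity). -/
noncomputable def ofList {V E : Type} (l : List (RT V E)) : Span V E := (l.map bas).sum

/-- Formal rational combination of planar trees, as an element of the span. -/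
noncomputable def combo {V E : Type} (l : List (ℚ × RT V E)) : Span V E :=
  (l.map fun p => p.1 • bas p.2).sum

mutual
/-- List of the graftings of `σ` on each vertex of a tree, via a new `a`-edge. -/
def graftT {V E : Type} (a : E) (σ : RT V E) : RT V E → List (RT V E)
  | .node v l => .node v ((a, σ) :: l) :: (graftL a σ l).map (.node v)
/-- Auxiliary: graftings of `σ` inside one of the listed subtrees. -/
def graftL {V E : Type} (a : E) (σ : RT V E) :
    List (E × RT V E) → List (List (E × RT V E))
  | [] => []
  | (e, t) :: r =>
      ((graftT a σ t).map fun t' => (e, t') :: r)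
        ++ ((graftL a σ r).map fun r' => (e, t) :: r')
end

/-- Multi-indices in `ℕ^{d+1}`. -/
abbrev Nd (d : ℕ) : Type := Fin (d + 1) → ℕ

/-- Componentwise binomial coefficient on `ℕ^{d+1}` (zero if some component exceeds). -/
def binom {d : ℕ} (n ℓ : Nd d) : ℕ := ∏ c, Nat.choose (n c) (ℓ c)

/-- The scaled degree `|n|_s = Σ_c s_c · n_c` of a multi-index. -/
def sdeg {d : ℕ} (s : Nd d) (n : Nd d) : ℕ := ∑ c, s c * n c

mutual
/-- The grading of a decorated tree: the sum of the scaled degrees of its edge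
decorations. -/
def gradT {S S' d : ℕ} (s : Nd d) : RT (Fin S × Nd d) (Fin S' × Nd d) → ℕ
  | .node _ l => gradL s l
def gradL {S S' d : ℕ} (s : Nd d) : List ((Fin S' × Nd d) × RT (Fin S × Nd d) (Fin S' × Nd d)) → ℕ
  | [] => 0
  | (e, t) :: r => sdeg s e.2 + gradT s t + gradL s r
end

mutual
/-- The deformed grafting `σ ∿̂ᵃ τ := Σ_{v∈N_τ} Σ_{ℓ} C(n_v, ℓ) σ ∿_v^{a−ℓ} (↑_v^{−ℓ} τ)`
of [BCCH], as a formal rational combination of planar representatives.  At a vertex with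
decoration `(s₀, n)` and for `ℓ ≤ n ⊓ a₂` the grafted edge is decorated `(a₁, a₂ − ℓ)`
and the vertex decoration becomes `(s₀, n − ℓ)`; terms with `ℓ ≰ n` or `ℓ ≰ a₂`
vanish. -/
noncomputable def dgraftT {S S' d : ℕ} (a : Fin S' × Nd d)
    (σ : RT (Fin S × Nd d) (Fin S' × Nd d)) :
    RT (Fin S × Nd d) (Fin S' × Nd d) → List (ℚ × RT (Fin S × Nd d) (Fin S' × Nd d))
  | .node v l =>
      ((Finset.Iic (v.2 ⊓ a.2)).toList.map fun ℓ =>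
        ((binom v.2 ℓ : ℚ), RT.node (v.1, v.2 - ℓ) (((a.1, a.2 - ℓ), σ) :: l)))
      ++ (dgraftL a σ l).map fun p => (p.1, RT.node v p.2)
/-- Auxiliary: deformed graftings inside one of the listed subtrees. -/
noncomputable def dgraftL {S S' d : ℕ} (a : Fin S' × Nd d)
    (σ : RT (Fin S × Nd d) (Fin S' × Nd d)) :
    List ((Fin S' × Nd d) × RT (Fin S × Nd d) (Fin S' × Nd d)) →
      List (ℚ × List ((Fin S' × Nd d) × RT (Fin S × Nd d) (Fin S' × Nd d)))
  | [] => []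
  | (e, t) :: r =>
      ((dgraftT a σ t).map fun p => (p.1, (e, p.2) :: r))
        ++ ((dgraftL a σ r).map fun p => (p.1, (e, t) :: p.2))
end

/-! The grafting at a vertex with shift `ℓ` lowers the decoration of the new edge from `a₂`
to `a₂ − ℓ` and leaves every other edge unchanged, so it lowers the grading by
`|a₂|_s − |a₂ − ℓ|_s`, which is positive for `ℓ ≠ 0` because all `s_c > 0`. The `ℓ = 0`
terms carry the coefficient `C(n_v, 0) = 1` and are exactly the undeformed graftings. -/

lemma sdeg_strictMono {d : ℕ} {s : Nd d} (hs : ∀ c, 0 < s c) : StrictMono (sdeg s) := by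
  intro n m hnm
  obtain ⟨hle, c, hc⟩ := Pi.lt_def.mp hnm
  exact Finset.sum_lt_sum (fun i _ => Nat.mul_le_mul_left _ (hle i))
    ⟨c, Finset.mem_univ c, Nat.mul_lt_mul_of_pos_left hc (hs c)⟩

lemma sdeg_sub_lt {d : ℕ} {s n ℓ : Nd d} (hs : ∀ c, 0 < s c) (hℓn : ℓ ≤ n) (hℓ : ℓ ≠ 0) :
    sdeg s (n - ℓ) < sdeg s n := by
  refine sdeg_strictMono hs (lt_of_le_of_ne tsub_le_self fun h => hℓ ?_)
  funext c
  have hc := congrFun h c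
  have hle : ℓ c ≤ n c := hℓn c
  rw [Pi.sub_apply] at hc
  rw [Pi.zero_apply]
  omega

/-- `L`, read as a formal rational combination, equals `M` plus terms of weight `< K`,
up to reordering. -/
def EqAddLowerOrder {β : Type*} (w : β → ℕ) (K : ℕ) (L : List (ℚ × β)) (M : List β) : Prop :=
  ∃ R : List (ℚ × β), L.Perm (M.map (fun x => (1, x)) ++ R) ∧ ∀ p ∈ R, w p.2 < K

namespace EqAddLowerOrder

variable {β γ : Type*} {w : β → ℕ} {K : ℕ}

lemma nil : EqAddLowerOrder w K [] [] := ⟨[], by simp, by simp⟩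

lemma append {L₁ L₂ : List (ℚ × β)} {M₁ M₂ : List β} (h₁ : EqAddLowerOrder w K L₁ M₁)
    (h₂ : EqAddLowerOrder w K L₂ M₂) : EqAddLowerOrder w K (L₁ ++ L₂) (M₁ ++ M₂) := by
  obtain ⟨R₁, hL₁, hR₁⟩ := h₁
  obtain ⟨R₂, hL₂, hR₂⟩ := h₂
  refine ⟨R₁ ++ R₂, (hL₁.append hL₂).trans ?_,
    fun p hp => (List.mem_append.mp hp).elim (hR₁ p) (hR₂ p)⟩
  simpa [List.append_assoc] using (List.perm_append_comm.append_left _).append_right R₂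

lemma map {w' : γ → ℕ} {K' : ℕ} {L : List (ℚ × β)} {M : List β}
    (h : EqAddLowerOrder w K L M) (f : β → γ) (hf : ∀ x, w x < K → w' (f x) < K') :
    EqAddLowerOrder w' K' (L.map fun p => (p.1, f p.2)) (M.map f) := by
  obtain ⟨R, hL, hR⟩ := h
  refine ⟨R.map fun p => (p.1, f p.2), ?_, ?_⟩
  · simpa [Function.comp_def] using hL.map fun p : ℚ × β => (p.1, f p.2)
  · simp only [List.mem_map]
    rintro _ ⟨p, hp, rfl⟩
    exact hf _ (hR p hp)

lemma toList_map {ι : Type*} (F : Finset ι) {i₀ : ι} (hi₀ : i₀ ∈ F) (g : ι → ℚ × β) {x : β}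
    (hg₀ : g i₀ = (1, x)) (hg : ∀ i ∈ F, i ≠ i₀ → w (g i).2 < K) :
    EqAddLowerOrder w K (F.toList.map g) [x] := by
  classical
  refine ⟨(F.toList.erase i₀).map g, ?_, ?_⟩
  · simpa [hg₀] using (List.perm_cons_erase (Finset.mem_toList.mpr hi₀)).map g
  · simp only [List.mem_map]
    rintro _ ⟨i, hi, rfl⟩
    exact hg i (Finset.mem_toList.mp (List.mem_of_mem_erase hi))
      ((F.nodup_toList.mem_erase_iff.mp hi).1)

lemma support_combo_sub_ofList {V E : Type} {w : RT V E → ℕ} {L : List (ℚ × RT V E)}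
    {M : List (RT V E)} (h : EqAddLowerOrder w K L M) (G : QT V E → ℕ)
    (hG : ∀ t, G (qt t) = w t) : ∀ q ∈ (combo L - ofList M).support, G q < K := by
  classical
  obtain ⟨R, hL, hR⟩ := h
  have hsub : combo L - ofList M = combo R := by
    simp [combo, ofList, (hL.map _).sum_eq, Function.comp_def]
  rw [hsub]
  clear hL hsub
  induction R with
  | nil => simp [combo]
  | cons p R ih =>
    intro q hq
    simp only [combo, List.map_cons, List.sum_cons] at hq
    rcases Finset.mem_union.mp (Finsupp.support_add hq) with hq | hq
    · obtain rfl := Finset.mem_singleton.mp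
        (Finsupp.support_single_subset (Finsupp.support_smul hq))
      exact (hG p.2).trans_lt (hR p List.mem_cons_self)
    · exact ih (fun p hp => hR p (List.mem_cons_of_mem _ hp)) q hq

end EqAddLowerOrder

section
variable {S S' d : ℕ} {s : Nd d} (a : Fin S' × Nd d) (σ : RT (Fin S × Nd d) (Fin S' × Nd d))

mutual

theorem dgraftT_eqAddLowerOrder (hs : ∀ c, 0 < s c) : ∀ τ : RT (Fin S × Nd d) (Fin S' × Nd d),
    EqAddLowerOrder (gradT s) (gradT s σ + gradT s τ + sdeg s a.2)
      (dgraftT a σ τ) (graftT a σ τ)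
  | .node v l => by
    rw [dgraftT, graftT, ← List.singleton_append]
    refine .append (.toList_map _ (i₀ := 0) (by simp) _ (by simp [binom]) ?_)
      ((dgraftL_eqAddLowerOrder hs l).map _ fun _ h => h)
    intro ℓ hℓ hℓ0
    have := sdeg_sub_lt hs (le_inf_iff.mp (Finset.mem_Iic.mp hℓ)).2 hℓ0
    simp only [gradT, gradL] at this ⊢
    omega

theorem dgraftL_eqAddLowerOrder (hs : ∀ c, 0 < s c) :
    ∀ l : List ((Fin S' × Nd d) × RT (Fin S × Nd d) (Fin S' × Nd d)),
      EqAddLowerOrder (gradL s) (gradT s σ + gradL s l + sdeg s a.2)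
        (dgraftL a σ l) (graftL a σ l)
  | [] => by simpa [dgraftL, graftL] using .nil
  | (e, t) :: r => by
    rw [dgraftL, graftL]
    refine .append ((dgraftT_eqAddLowerOrder hs t).map (fun x => (e, x) :: r) fun _ h => ?_)
      ((dgraftL_eqAddLowerOrder hs r).map ((e, t) :: ·) fun _ h => ?_) <;>
    · simp only [gradL] at h ⊢
      omega

end

end

/-- **The deformed grafting is a lower-order deformation of grafting.**  With vertex
decorations in `V = S × ℕ^{d+1}`, edge decorations in `E = S' × ℕ^{d+1}` and a scaling
`s` with all `s_c > 0`, one has `σ ∿̂ᵃ τ = σ ∿ᵃ τ + (terms of strictly lower grading)`: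
the `ℓ = 0` part of `σ ∿̂ᵃ τ` is exactly the undeformed grafting `σ ∿ᵃ τ`, and every
tree occurring in the difference `σ ∿̂ᵃ τ − σ ∿ᵃ τ` has grading strictly smaller than
the grading `|σ| + |τ| + |a₂|_s` of the leading terms.  Here `G` is the grading induced
on non-planar trees. -/
theorem dgraft_deformation {S S' d : ℕ} (s : Nd d) (hs : ∀ c, 0 < s c)
    (G : QT (Fin S × Nd d) (Fin S' × Nd d) → ℕ)
    (hG : ∀ t, G (qt t) = gradT s t)
    (a : Fin S' × Nd d) (σ τ : RT (Fin S × Nd d) (Fin S' × Nd d)) :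
    ∀ q ∈ (combo (dgraftT a σ τ) - ofList (graftT a σ τ)).support,
      G q < gradT s σ + gradT s τ + sdeg s a.2 :=
  (dgraftT_eqAddLowerOrder a σ hs τ).support_combo_sub_ofList G hG
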